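/- Gaussian integral identity with Owen's T function: for all μ ∈ ℝ, σ > 0 and c ∈ (0, σ²), 1 − ∫_0^1 τ^{−1/2}·Φ(μ/√(σ² − τc)) dτ = 1 − 2Φ(μ/√(σ² − c)) − (√(2π)·σ/√c)·φ(μ/σ)·[1 − 2Φ((μ/σ)·√(c/(σ² − c)))] − (2√(2π)·μ/√c)·T(μ/σ, √(c/(σ² − c))). -/

import Mathlib

open MeasureTheory ProbabilityTheory Real

/-- Standard normal CDF `Φ`. -/
noncomputable def stdNormalCDF (x : ℝ) : ℝ := ((gaussianReal 0 1) (Set.Iic x)).toReal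

/-- Standard normal PDF `φ`. -/
noncomputable def stdNormalPDF (x : ℝ) : ℝ :=
  Real.exp (-x ^ 2 / 2) / Real.sqrt (2 * Real.pi)

/-- Owen's T function `T(x,y) = (1/(2π)) ∫_0^y exp(−x²(1+z²)/2)/(1+z²) dz`. -/
noncomputable def owenT (x y : ℝ) : ℝ :=
  1 / (2 * Real.pi) * ∫ z in (0 : ℝ)..y, Real.exp (-x ^ 2 * (1 + z ^ 2) / 2) / (1 + z ^ 2)

/-!
Substituting `τ = t²` turns the integral into `2 ∫₀¹ Φ(μ/w) dt` with `w = √(σ² − t²c)`, and the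
right-hand side is `1 − G(1)` for an explicit antiderivative `G` of `2Φ(μ/w)` with `G(0) = 0`.
Differentiating `G` produces, besides `2Φ(μ/w)`, three multiples of `φ(μ/w)`, which cancel:
with `a = √c t / w` one has `(μ/σ)² (1 + a²) = (μ/w)²`, so `φ(μ/σ) φ(μ a/σ) = φ(μ/w)/√(2π)`.
-/

open Set

lemma gaussianPDFReal_zero_one : gaussianPDFReal 0 1 = stdNormalPDF := by
  funext t
  simp [gaussianPDFReal, stdNormalPDF, div_eq_inv_mul]

lemma continuous_stdNormalPDF : Continuous stdNormalPDF := by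
  unfold stdNormalPDF
  fun_prop

lemma integrable_stdNormalPDF : Integrable stdNormalPDF :=
  gaussianPDFReal_zero_one ▸ integrable_gaussianPDFReal 0 1

lemma stdNormalPDF_neg (x : ℝ) : stdNormalPDF (-x) = stdNormalPDF x := by
  simp [stdNormalPDF]

lemma stdNormalPDF_mul_stdNormalPDF {x y z : ℝ} (h : x ^ 2 + y ^ 2 = z ^ 2) :
    stdNormalPDF x * stdNormalPDF y = stdNormalPDF z / √(2 * π) := by
  rw [stdNormalPDF, stdNormalPDF, stdNormalPDF, div_mul_div_comm, ← Real.exp_add,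
    div_div, ← pow_two, sq_sqrt (by positivity), ← h]
  ring_nf

lemma stdNormalCDF_eq_integral_Iic (x : ℝ) :
    stdNormalCDF x = ∫ t in Iic x, stdNormalPDF t := by
  rw [stdNormalCDF, gaussianReal_apply_eq_integral 0 one_ne_zero,
    ENNReal.toReal_ofReal (setIntegral_nonneg measurableSet_Iic
      fun t _ => gaussianPDFReal_nonneg 0 1 t), gaussianPDFReal_zero_one]

lemma stdNormalCDF_nonneg (x : ℝ) : 0 ≤ stdNormalCDF x := ENNReal.toReal_nonneg

lemma stdNormalCDF_zero : stdNormalCDF 0 = 1 / 2 := by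
  have hsymm : ∫ t in Iic (0 : ℝ), stdNormalPDF t = ∫ t in Ioi (0 : ℝ), stdNormalPDF t := by
    rw [← neg_zero, ← integral_comp_neg_Iic]
    simp_rw [stdNormalPDF_neg, neg_zero]
  have htotal : (∫ t in Iic (0 : ℝ), stdNormalPDF t) + ∫ t in Ioi (0 : ℝ), stdNormalPDF t = 1 := by
    rw [← setIntegral_union (Iic_disjoint_Ioi le_rfl) measurableSet_Ioi
      integrable_stdNormalPDF.integrableOn integrable_stdNormalPDF.integrableOn,
      Iic_union_Ioi, setIntegral_univ, ← gaussianPDFReal_zero_one,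
      integral_gaussianPDFReal_eq_one 0 one_ne_zero]
  rw [stdNormalCDF_eq_integral_Iic]
  linarith

lemma stdNormalCDF_eq_half_add_integral (x : ℝ) :
    stdNormalCDF x = 1 / 2 + ∫ t in (0 : ℝ)..x, stdNormalPDF t := by
  rw [← intervalIntegral.integral_Iic_sub_Iic integrable_stdNormalPDF.integrableOn
    integrable_stdNormalPDF.integrableOn, ← stdNormalCDF_eq_integral_Iic,
    ← stdNormalCDF_eq_integral_Iic, stdNormalCDF_zero]
  ring

lemma hasDerivAt_stdNormalCDF (x : ℝ) : HasDerivAt stdNormalCDF (stdNormalPDF x) x := by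
  rw [funext stdNormalCDF_eq_half_add_integral]
  exact (continuous_stdNormalPDF.integral_hasStrictDerivAt 0 x).hasDerivAt.const_add _

lemma hasDerivAt_owenT (x y : ℝ) :
    HasDerivAt (owenT x) (stdNormalPDF x * stdNormalPDF (x * y) / (1 + y ^ 2)) y := by
  have hcont : Continuous fun z : ℝ => Real.exp (-x ^ 2 * (1 + z ^ 2) / 2) / (1 + z ^ 2) :=
    .div (by fun_prop) (by fun_prop) fun z => by positivity
  refine ((hcont.integral_hasStrictDerivAt 0 y).hasDerivAt.const_mul (1 / (2 * π))).congr_deriv ?_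
  rw [stdNormalPDF_mul_stdNormalPDF (z := √(x ^ 2 * (1 + y ^ 2))) (by
    rw [sq_sqrt (by positivity)]; ring), stdNormalPDF, sq_sqrt (by positivity)]
  field_simp
  rw [sq_sqrt (by positivity)]

lemma owenT_zero_right (x : ℝ) : owenT x 0 = 0 := by
  simp [owenT]

/-- The sign condition on `g` makes the singular integrand automatically integrable. -/
theorem integral_inv_sqrt_mul_eq_sub {G g : ℝ → ℝ} {b : ℝ} (hb : 0 ≤ b)
    (hG : ∀ t ∈ Icc 0 √b, HasDerivAt G (2 * g (t ^ 2)) t) (hg : ∀ τ ∈ Ioo 0 b, 0 ≤ g τ) :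
    ∫ τ in (0 : ℝ)..b, (√τ)⁻¹ * g τ = G √b - G 0 := by
  have hcont : ContinuousOn (G ∘ sqrt) (Icc 0 b) :=
    (HasDerivAt.continuousOn hG).comp continuous_sqrt.continuousOn
      fun τ hτ => ⟨sqrt_nonneg τ, sqrt_le_sqrt hτ.2⟩
  have hderiv : ∀ τ ∈ Ioo 0 b, HasDerivAt (G ∘ sqrt) ((√τ)⁻¹ * g τ) τ := by
    intro τ hτ
    have hsqrt : 0 < √τ := sqrt_pos.2 hτ.1
    refine ((hG √τ ⟨hsqrt.le, sqrt_le_sqrt hτ.2.le⟩).comp τ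
      (hasDerivAt_sqrt hτ.1.ne')).congr_deriv ?_
    rw [sq_sqrt hτ.1.le]
    field_simp
  have hint := intervalIntegral.integrableOn_deriv_of_nonneg hcont hderiv
    fun τ hτ => mul_nonneg (inv_nonneg.2 (sqrt_nonneg τ)) (hg τ hτ)
  rw [intervalIntegral.integral_eq_sub_of_hasDerivAt_of_le hb hcont hderiv
    ((intervalIntegrable_iff_integrableOn_Ioc_of_le hb).2 hint)]
  simp

noncomputable def owenPrimitive (μ σ c t : ℝ) : ℝ :=
  2 * t * stdNormalCDF (μ / √(σ ^ 2 - t ^ 2 * c))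
    + √(2 * π) * σ / √c * stdNormalPDF (μ / σ)
        * (1 - 2 * stdNormalCDF (μ / σ * (√c * t / √(σ ^ 2 - t ^ 2 * c))))
    + 2 * √(2 * π) * μ / √c * owenT (μ / σ) (√c * t / √(σ ^ 2 - t ^ 2 * c))

section Primitive

variable (μ σ : ℝ) {c s : ℝ}

lemma owenPrimitive_zero : owenPrimitive μ σ c 0 = 0 := by
  simp [owenPrimitive, stdNormalCDF_zero, owenT_zero_right]

lemma owenPrimitive_one (hc : 0 ≤ c) :
    owenPrimitive μ σ c 1 = 2 * stdNormalCDF (μ / √(σ ^ 2 - c))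
      + √(2 * π) * σ / √c * stdNormalPDF (μ / σ)
          * (1 - 2 * stdNormalCDF (μ / σ * √(c / (σ ^ 2 - c))))
      + 2 * √(2 * π) * μ / √c * owenT (μ / σ) (√(c / (σ ^ 2 - c))) := by
  simp [owenPrimitive, sqrt_div hc]

lemma hasDerivAt_sqrt_sub_sq_mul (hs : s ^ 2 * c < σ ^ 2) :
    HasDerivAt (fun t => √(σ ^ 2 - t ^ 2 * c)) (-(s * c) / √(σ ^ 2 - s ^ 2 * c)) s := by
  have h := ((hasDerivAt_pow 2 s).mul_const c).const_sub (σ ^ 2) |>.sqrt (by linarith)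
  refine h.congr_deriv ?_
  field_simp
  ring

theorem hasDerivAt_owenPrimitive (hc : 0 < c) (hs : s ^ 2 * c < σ ^ 2) :
    HasDerivAt (owenPrimitive μ σ c) (2 * stdNormalCDF (μ / √(σ ^ 2 - s ^ 2 * c))) s := by
  have hw' := hasDerivAt_sqrt_sub_sq_mul σ hs
  set w := √(σ ^ 2 - s ^ 2 * c) with hw_def
  have hw : 0 < w := sqrt_pos.2 (by linarith)
  have hw2 : w ^ 2 = σ ^ 2 - s ^ 2 * c := sq_sqrt (by linarith)
  have hσ : σ ≠ 0 := by rintro rfl; nlinarith [sq_nonneg s]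
  have hc2 : √c ^ 2 = c := sq_sqrt hc.le
  have hu : HasDerivAt (fun t => μ / √(σ ^ 2 - t ^ 2 * c)) (μ * s * c / w ^ 3) s := by
    refine ((hasDerivAt_const s μ).div hw' hw.ne').congr_deriv ?_
    rw [← hw_def]
    field_simp
    ring
  have ha : HasDerivAt (fun t => √c * t / √(σ ^ 2 - t ^ 2 * c)) (√c * σ ^ 2 / w ^ 3) s := by
    refine (((hasDerivAt_id s).const_mul √c).div hw' hw.ne').congr_deriv ?_
    simp only [id, ← hw_def]
    field_simp
    linear_combination hw2
  have hφ : stdNormalPDF (μ / σ) * stdNormalPDF (μ / σ * (√c * s / w))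
      = stdNormalPDF (μ / w) / √(2 * π) :=
    stdNormalPDF_mul_stdNormalPDF <| by
      field_simp
      linear_combination μ ^ 2 * s ^ 2 * hc2 + μ ^ 2 * hw2
  have hP : 0 < stdNormalPDF (μ / σ) := by unfold stdNormalPDF; positivity
  have hQ : stdNormalPDF (μ / σ * (√c * s / w))
      = stdNormalPDF (μ / w) / (√(2 * π) * stdNormalPDF (μ / σ)) := by
    rw [eq_div_iff (by positivity), mul_comm √(2 * π), ← mul_assoc,
      mul_comm _ (stdNormalPDF _), hφ]
    field_simp
  have hG := (((hasDerivAt_id s).const_mul 2).mul ((hasDerivAt_stdNormalCDF _).comp s hu)).add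
      ((((hasDerivAt_stdNormalCDF _).comp s (ha.const_mul (μ / σ))).const_mul 2).const_sub 1
        |>.const_mul (√(2 * π) * σ / √c * stdNormalPDF (μ / σ)))
    |>.add ((hasDerivAt_owenT (μ / σ) _).comp s ha |>.const_mul (2 * √(2 * π) * μ / √c))
  refine hG.congr_deriv ?_
  simp only [id, Function.comp_apply, ← hw_def, hQ]
  field_simp
  rw [hc2, show w ^ 2 + s ^ 2 * c = σ ^ 2 by linarith]
  linear_combination μ * σ ^ 2 * stdNormalPDF (μ / w) * hw2

end Primitive

theorem gaussian_integral_owenT_general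
    (μ σ c : ℝ) (hc : c ∈ Set.Ioo 0 (σ ^ 2)) :
    1 - (∫ τ in (0 : ℝ)..1, (Real.sqrt τ)⁻¹ * stdNormalCDF (μ / Real.sqrt (σ ^ 2 - τ * c))) =
      1 - 2 * stdNormalCDF (μ / Real.sqrt (σ ^ 2 - c))
        - Real.sqrt (2 * Real.pi) * σ / Real.sqrt c * stdNormalPDF (μ / σ)
            * (1 - 2 * stdNormalCDF (μ / σ * Real.sqrt (c / (σ ^ 2 - c))))
        - 2 * Real.sqrt (2 * Real.pi) * μ / Real.sqrt c
            * owenT (μ / σ) (Real.sqrt (c / (σ ^ 2 - c))) := by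
  obtain ⟨hc, hcσ⟩ := hc
  have hderiv : ∀ t ∈ Icc 0 √1, HasDerivAt (owenPrimitive μ σ c)
      (2 * stdNormalCDF (μ / √(σ ^ 2 - t ^ 2 * c))) t := by
    intro t ⟨ht0, ht1⟩
    rw [sqrt_one] at ht1
    exact hasDerivAt_owenPrimitive μ σ hc (by nlinarith [pow_le_one₀ (n := 2) ht0 ht1])
  rw [integral_inv_sqrt_mul_eq_sub zero_le_one hderiv fun τ _ => stdNormalCDF_nonneg _,
    sqrt_one, owenPrimitive_one μ σ hc.le, owenPrimitive_zero]
  ring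

/-- **Gaussian integral identity with Owen's T function** (Lemma G.1): for all `μ ∈ ℝ`,
`σ > 0` and `c ∈ (0, σ²)`,
`1 − ∫_0^1 τ^{−1/2} Φ(μ/√(σ²−τc)) dτ = 1 − 2Φ(μ/√(σ²−c))
  − (√(2π)σ/√c) φ(μ/σ) [1 − 2Φ((μ/σ)√(c/(σ²−c)))] − (2√(2π)μ/√c) T(μ/σ, √(c/(σ²−c)))`. -/
theorem gaussian_integral_owenT
    (μ σ c : ℝ) (hσ : 0 < σ) (hc : c ∈ Set.Ioo 0 (σ ^ 2)) :
    1 - (∫ τ in (0 : ℝ)..1, (Real.sqrt τ)⁻¹ * stdNormalCDF (μ / Real.sqrt (σ ^ 2 - τ * c))) =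
      1 - 2 * stdNormalCDF (μ / Real.sqrt (σ ^ 2 - c))
        - Real.sqrt (2 * Real.pi) * σ / Real.sqrt c * stdNormalPDF (μ / σ)
            * (1 - 2 * stdNormalCDF (μ / σ * Real.sqrt (c / (σ ^ 2 - c))))
        - 2 * Real.sqrt (2 * Real.pi) * μ / Real.sqrt c
            * owenT (μ / σ) (Real.sqrt (c / (σ ^ 2 - c))) :=
  gaussian_integral_owenT_general μ σ c hc
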